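/- arXiv:2107.02290 — 6 statements merged into one kernel-verified Lean document; each statement's English description precedes it below -/
import Mathlib

section
/- Let A_FF be invertible and A_CC be invertible. Define the F-relaxation error propagator E_F = I - fromBlocks(I_F, A_FF⁻¹·A_FC, 0, 0) and, for a scalar ω ∈ ℂ, the weighted C-relaxation error propagator E_C(ω) = I - ω·fromBlocks(0, 0, A_CC⁻¹·A_CF, I_C). Then E_F · E_C(ω) · E_F = P · (I_C - ω·A_CC⁻¹·A_Δ) · R_I, where P, R_I and the Schur complement A_Δ are as defined in the context. -/
/-!
F-relaxation is the projection `E_F = P R_I` onto the range of the ideal interpolation, and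
`R_I P = I`. Hence `E_F E_C E_F = P (R_I E_C P) R_I`, and the compression `R_I E_C P` is
`I - ω (I - A_CC⁻¹ A_CF A_FF⁻¹ A_FC) = I - ω A_CC⁻¹ A_Δ`.
-/

open Matrix

namespace Matrix

variable {m n R : Type*} [Fintype n] [DecidableEq n]

theorem one_sub_fromBlocks_one_zero_zero [DecidableEq m] [Ring R] (X : Matrix m n R) :
    1 - fromBlocks 1 X 0 (0 : Matrix n n R)
      = fromRows (-X) (1 : Matrix n n R) * fromCols (0 : Matrix n m R) 1 := by
  rw [fromRows_mul_fromCols, ← fromBlocks_one, sub_eq_add_neg, fromBlocks_neg, fromBlocks_add]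
  simp

theorem fromCols_zero_one_mul_fromRows [Fintype m] [Semiring R] {k : Type*}
    (A : Matrix m k R) (B : Matrix n k R) :
    fromCols (0 : Matrix n m R) (1 : Matrix n n R) * fromRows A B = B := by
  simp [fromCols_mul_fromRows]

theorem fromCols_zero_one_mul_one_sub_smul_fromBlocks_mul_fromRows [Fintype m] [DecidableEq m]
    [CommRing R] (X : Matrix m n R) (Y : Matrix n m R) (ω : R) :
    fromCols (0 : Matrix n m R) (1 : Matrix n n R)
        * ((1 : Matrix (m ⊕ n) (m ⊕ n) R) - ω • fromBlocks 0 0 Y 1)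
        * fromRows (-X) (1 : Matrix n n R)
      = 1 - ω • (1 - Y * X) := by
  rw [Matrix.mul_sub, Matrix.mul_one, Matrix.mul_smul, fromCols_mul_fromBlocks, Matrix.sub_mul,
    Matrix.smul_mul, fromCols_zero_one_mul_fromRows]
  simp only [Matrix.mul_zero, Matrix.one_mul, zero_add, mul_one, fromCols_mul_fromRows,
    Matrix.mul_neg, smul_add, smul_neg, smul_sub, sub_right_inj]
  abel

end Matrix

theorem stmt_0_general {F C : Type*} [Fintype F] [Fintype C] [DecidableEq F] [DecidableEq C]
    (AFF : Matrix F F ℂ) (AFC : Matrix F C ℂ) (ACF : Matrix C F ℂ) (ACC : Matrix C C ℂ)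
    (hCC : IsUnit ACC) (ω : ℂ)
    (EF : Matrix (F ⊕ C) (F ⊕ C) ℂ)
    (hEF : EF = 1 - Matrix.fromBlocks 1 (AFF⁻¹ * AFC) 0 0)
    (EC : Matrix (F ⊕ C) (F ⊕ C) ℂ)
    (hEC : EC = 1 - ω • Matrix.fromBlocks 0 0 (ACC⁻¹ * ACF) 1)
    (P : Matrix (F ⊕ C) C ℂ) (hP : P = Matrix.fromRows (-(AFF⁻¹ * AFC)) 1)
    (RI : Matrix C (F ⊕ C) ℂ) (hRI : RI = Matrix.fromCols 0 1)
    (AΔ : Matrix C C ℂ) (hAΔ : AΔ = ACC - ACF * AFF⁻¹ * AFC) :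
    EF * EC * EF = P * ((1 : Matrix C C ℂ) - ω • (ACC⁻¹ * AΔ)) * RI := by
  have hEF_proj : EF = P * RI := by rw [hEF, hP, hRI, one_sub_fromBlocks_one_zero_zero]
  have hSchur : ACC⁻¹ * AΔ = 1 - ACC⁻¹ * ACF * (AFF⁻¹ * AFC) := by
    rw [hAΔ, Matrix.mul_sub, nonsing_inv_mul ACC ((isUnit_iff_isUnit_det ACC).mp hCC)]
    simp only [Matrix.mul_assoc]
  calc EF * EC * EF = P * (RI * EC * P) * RI := by simp only [hEF_proj, Matrix.mul_assoc]
    _ = P * ((1 : Matrix C C ℂ) - ω • (ACC⁻¹ * AΔ)) * RI := by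
      rw [hRI, hEC, hP, fromCols_zero_one_mul_one_sub_smul_fromBlocks_mul_fromRows, hSchur]

theorem stmt_0 {F C : Type*} [Fintype F] [Fintype C] [DecidableEq F] [DecidableEq C]
    (AFF : Matrix F F ℂ) (AFC : Matrix F C ℂ) (ACF : Matrix C F ℂ) (ACC : Matrix C C ℂ)
    (hFF : IsUnit AFF) (hCC : IsUnit ACC) (ω : ℂ)
    (EF : Matrix (F ⊕ C) (F ⊕ C) ℂ)
    (hEF : EF = 1 - Matrix.fromBlocks 1 (AFF⁻¹ * AFC) 0 0)
    (EC : Matrix (F ⊕ C) (F ⊕ C) ℂ)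
    (hEC : EC = 1 - ω • Matrix.fromBlocks 0 0 (ACC⁻¹ * ACF) 1)
    (P : Matrix (F ⊕ C) C ℂ) (hP : P = Matrix.fromRows (-(AFF⁻¹ * AFC)) 1)
    (RI : Matrix C (F ⊕ C) ℂ) (hRI : RI = Matrix.fromCols 0 1)
    (AΔ : Matrix C C ℂ) (hAΔ : AΔ = ACC - ACF * AFF⁻¹ * AFC) :
    EF * EC * EF = P * ((1 : Matrix C C ℂ) - ω • (ACC⁻¹ * AΔ)) * RI :=
  stmt_0_general AFF AFC ACF ACC hCC ω EF hEF EC hEC P hP RI hRI AΔ hAΔ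
end

section
/- Let A_FF be invertible, let B_Δ : Matrix C C ℂ be invertible, and let X : Matrix C C ℂ be arbitrary. Then the two-level error propagator factors as (I - P·B_Δ⁻¹·R_I·A) · (P·X·R_I) = P·(I_C - B_Δ⁻¹·A_Δ)·X·R_I. In particular, with X = I_C - ω·A_Δ this gives the two-level MGRIT error propagator for FCF-relaxation with weighted C-relaxation: (I - P·B_Δ⁻¹·R_I·A)·P·(I - ω·A_Δ)·R_I = P·(I - B_Δ⁻¹·A_Δ)·(I - ω·A_Δ)·R_I. -/
/-! The Galerkin coarse operator `R_I A P` of the ideal interpolation is exactly the Schur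
complement `A_Δ`; reassociating, the coarse-grid correction `I - P B_Δ⁻¹ R_I A` acts on
`P X R_I` as `I_C - B_Δ⁻¹ A_Δ` acts on `X`. -/

open Matrix

section

variable {m n : Type*} [Fintype m] [Fintype n] {α : Type*} [Ring α]

theorem fromCols_zero_one_mul_fromBlocks_mul_fromRows_neg_one [DecidableEq n]
    (A : Matrix m m α) (B : Matrix m n α) (C : Matrix n m α) (D : Matrix n n α)
    (M : Matrix m m α) :
    (fromCols 0 1 : Matrix n (m ⊕ n) α) * fromBlocks A B C D *
      (fromRows (-(M * B)) 1 : Matrix (m ⊕ n) n α) = D - C * M * B := by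
  rw [fromCols_mul_fromBlocks, fromCols_mul_fromRows]
  simp only [Matrix.zero_mul, Matrix.one_mul, zero_add, Matrix.mul_neg, Matrix.mul_one,
    Matrix.mul_assoc]
  abel

theorem one_sub_coarseCorrection_mul_prolong_restrict {p : Type*} [Fintype p] [DecidableEq p]
    [DecidableEq n] (P : Matrix p n α) (R : Matrix n p α) (A : Matrix p p α)
    (B Y : Matrix n n α) :
    (1 - P * B * R * A) * (P * Y * R) = P * ((1 - B * (R * A * P)) * Y) * R := by
  simp only [Matrix.sub_mul, Matrix.mul_sub, Matrix.one_mul, Matrix.mul_assoc]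

end

theorem stmt_2_general {F C : Type*} [Fintype F] [Fintype C] [DecidableEq F] [DecidableEq C]
    (AFF : Matrix F F ℂ) (AFC : Matrix F C ℂ) (ACF : Matrix C F ℂ) (ACC : Matrix C C ℂ)
    (BΔ : Matrix C C ℂ)
    (A : Matrix (F ⊕ C) (F ⊕ C) ℂ) (hA : A = Matrix.fromBlocks AFF AFC ACF ACC)
    (P : Matrix (F ⊕ C) C ℂ) (hP : P = Matrix.fromRows (-(AFF⁻¹ * AFC)) 1)
    (RI : Matrix C (F ⊕ C) ℂ) (hRI : RI = Matrix.fromCols 0 1)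
    (AΔ : Matrix C C ℂ) (hAΔ : AΔ = ACC - ACF * AFF⁻¹ * AFC)
    (X : Matrix C C ℂ) (ω : ℂ) :
    ((1 : Matrix (F ⊕ C) (F ⊕ C) ℂ) - P * BΔ⁻¹ * RI * A) * (P * X * RI) =
        P * (((1 : Matrix C C ℂ) - BΔ⁻¹ * AΔ) * X) * RI ∧
    ((1 : Matrix (F ⊕ C) (F ⊕ C) ℂ) - P * BΔ⁻¹ * RI * A) *
        (P * ((1 : Matrix C C ℂ) - ω • AΔ) * RI) =
      P * (((1 : Matrix C C ℂ) - BΔ⁻¹ * AΔ) * ((1 : Matrix C C ℂ) - ω • AΔ)) * RI := by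
  have galerkin : RI * A * P = AΔ := by
    rw [hRI, hA, hP, hAΔ, fromCols_zero_one_mul_fromBlocks_mul_fromRows_neg_one]
  simp only [one_sub_coarseCorrection_mul_prolong_restrict, galerkin, and_self]

theorem stmt_2 {F C : Type*} [Fintype F] [Fintype C] [DecidableEq F] [DecidableEq C]
    (AFF : Matrix F F ℂ) (AFC : Matrix F C ℂ) (ACF : Matrix C F ℂ) (ACC : Matrix C C ℂ)
    (hFF : IsUnit AFF)
    (BΔ : Matrix C C ℂ) (hBΔ : IsUnit BΔ)
    (A : Matrix (F ⊕ C) (F ⊕ C) ℂ) (hA : A = Matrix.fromBlocks AFF AFC ACF ACC)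
    (P : Matrix (F ⊕ C) C ℂ) (hP : P = Matrix.fromRows (-(AFF⁻¹ * AFC)) 1)
    (RI : Matrix C (F ⊕ C) ℂ) (hRI : RI = Matrix.fromCols 0 1)
    (AΔ : Matrix C C ℂ) (hAΔ : AΔ = ACC - ACF * AFF⁻¹ * AFC)
    (X : Matrix C C ℂ) (ω : ℂ) :
    ((1 : Matrix (F ⊕ C) (F ⊕ C) ℂ) - P * BΔ⁻¹ * RI * A) * (P * X * RI) =
        P * (((1 : Matrix C C ℂ) - BΔ⁻¹ * AΔ) * X) * RI ∧
    ((1 : Matrix (F ⊕ C) (F ⊕ C) ℂ) - P * BΔ⁻¹ * RI * A) *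
        (P * ((1 : Matrix C C ℂ) - ω • AΔ) * RI) =
      P * (((1 : Matrix C C ℂ) - BΔ⁻¹ * AΔ) * ((1 : Matrix C C ℂ) - ω • AΔ)) * RI :=
  stmt_2_general AFF AFC ACF ACC BΔ A hA P hP RI hRI AΔ hAΔ X ω
end

section
/- Let R be a ring (not necessarily commutative), Θ, Ψ ∈ R, and N a positive natural number. Let A be the N×N matrix over R with identity diagonal, -Θ on the first subdiagonal, and zero elsewhere, and let B be the N×N matrix with identity diagonal, -Ψ on the first subdiagonal, and zero elsewhere. Then the matrix M = I - B⁻¹·A has entries M_{ij} = Ψ^{i-j-1}·(Θ - Ψ) for i > j, and M_{ij} = 0 for i ≤ j. -/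
/-!
`A = 1 - subdiag Θ` and `B = 1 - subdiag Ψ`, and `1 - subdiag Ψ` has the explicit inverse
`lowerPow Ψ` with entries `Ψ ^ (i - j)` on and below the diagonal (a truncated geometric series).
Hence `1 - B⁻¹ A = B⁻¹ (B - A) = lowerPow Ψ * subdiag (Θ - Ψ)`, and right multiplication by
`subdiag (Θ - Ψ)` shifts the columns of `lowerPow Ψ` by one and multiplies them by `Θ - Ψ`
on the right.
-/

namespace Matrix

variable {R : Type*} [Ring R] {N : ℕ}

def subdiag (c : R) : Matrix (Fin N) (Fin N) R :=
  of fun i j => if (i : ℕ) = j + 1 then c else 0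

def lowerPow (c : R) : Matrix (Fin N) (Fin N) R :=
  of fun i j => if (j : ℕ) ≤ i then c ^ ((i : ℕ) - j) else 0

theorem subdiag_sub (a b : R) :
    (subdiag (a - b) : Matrix (Fin N) (Fin N) R) = subdiag a - subdiag b := by
  ext i j
  simp only [subdiag, of_apply, sub_apply]
  split_ifs <;> simp

theorem eq_one_sub_subdiag {A : Matrix (Fin N) (Fin N) R} {c : R}
    (hA : ∀ i j : Fin N, A i j = if i = j then 1 else if (i : ℕ) = (j : ℕ) + 1 then -c else 0) :
    A = 1 - subdiag c := by
  ext i j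
  rw [hA, sub_apply, one_apply, subdiag, of_apply]
  split_ifs with h₁ h₂ <;> first | simp | (subst h₁; omega)

theorem mul_subdiag_apply (X : Matrix (Fin N) (Fin N) R) (c : R) (i j : Fin N) :
    (X * subdiag c : Matrix (Fin N) (Fin N) R) i j =
      if h : (j : ℕ) + 1 < N then X i ⟨j + 1, h⟩ * c else 0 := by
  simp only [mul_apply, subdiag, of_apply, mul_ite, mul_zero]
  split_ifs with h
  · rw [Finset.sum_eq_single ⟨j + 1, h⟩ (fun k _ hk => if_neg fun hk' => hk (Fin.ext hk'))
      (fun h' => absurd (Finset.mem_univ _) h'), if_pos rfl]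
  · exact Finset.sum_eq_zero fun k _ => if_neg (by omega)

theorem lowerPow_mul_subdiag_apply (c d : R) (i j : Fin N) :
    (lowerPow c * subdiag d : Matrix (Fin N) (Fin N) R) i j =
      if (j : ℕ) < i then c ^ ((i : ℕ) - j - 1) * d else 0 := by
  rw [mul_subdiag_apply]
  simp only [lowerPow, of_apply, Nat.sub_sub]
  split_ifs <;> first | rfl | (exfalso; omega) | simp

theorem lowerPow_mul_one_sub_subdiag (c : R) :
    (lowerPow c : Matrix (Fin N) (Fin N) R) * (1 - subdiag c) = 1 := by
  ext i j
  rw [mul_sub, mul_one, sub_apply, lowerPow_mul_subdiag_apply, one_apply, lowerPow, of_apply]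
  rcases lt_trichotomy (j : ℕ) i with h | h | h
  · rw [if_pos h.le, if_pos h, if_neg (Fin.ne_of_gt h), ← pow_succ, Nat.sub_add_cancel (by omega),
      sub_self]
  · obtain rfl := Fin.ext h
    simp
  · simp [h.not_ge, h.not_gt, Fin.ne_of_lt h]

end Matrix

open Matrix in
theorem stmt_5_general {R : Type*} [Ring R] (Θ Ψ : R) (N : ℕ)
    (A B Binv : Matrix (Fin N) (Fin N) R)
    (hA : ∀ i j : Fin N, A i j =
      if i = j then 1 else if (i : ℕ) = (j : ℕ) + 1 then -Θ else 0)
    (hB : ∀ i j : Fin N, B i j =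
      if i = j then 1 else if (i : ℕ) = (j : ℕ) + 1 then -Ψ else 0)
    (hBinv₁ : B * Binv = 1) :
    ∀ i j : Fin N, ((1 : Matrix (Fin N) (Fin N) R) - Binv * A) i j =
      if (j : ℕ) < (i : ℕ) then Ψ ^ ((i : ℕ) - (j : ℕ) - 1) * (Θ - Ψ) else 0 := by
  obtain rfl := eq_one_sub_subdiag hA
  obtain rfl := eq_one_sub_subdiag hB
  have hinv := lowerPow_mul_one_sub_subdiag (N := N) Ψ
  obtain rfl : Binv = lowerPow Ψ := (left_inv_eq_right_inv hinv hBinv₁).symm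
  have hM : (1 : Matrix (Fin N) (Fin N) R) - lowerPow Ψ * (1 - subdiag Θ) =
      lowerPow Ψ * subdiag (Θ - Ψ) := by
    nth_rw 1 [← hinv]
    rw [← mul_sub, sub_sub_sub_cancel_left, subdiag_sub]
  intro i j
  rw [hM, lowerPow_mul_subdiag_apply]

theorem stmt_5 {R : Type*} [Ring R] (Θ Ψ : R) (N : ℕ) (hN : 0 < N)
    (A B Binv : Matrix (Fin N) (Fin N) R)
    (hA : ∀ i j : Fin N, A i j =
      if i = j then 1 else if (i : ℕ) = (j : ℕ) + 1 then -Θ else 0)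
    (hB : ∀ i j : Fin N, B i j =
      if i = j then 1 else if (i : ℕ) = (j : ℕ) + 1 then -Ψ else 0)
    (hBinv₁ : B * Binv = 1) (hBinv₂ : Binv * B = 1) :
    ∀ i j : Fin N, ((1 : Matrix (Fin N) (Fin N) R) - Binv * A) i j =
      if (j : ℕ) < (i : ℕ) then Ψ ^ ((i : ℕ) - (j : ℕ) - 1) * (Θ - Ψ) else 0 :=
  stmt_5_general Θ Ψ N A B Binv hA hB hBinv₁
end

section
/- Let R be an algebra over ℂ (not necessarily commutative), Θ, Ψ ∈ R, ω ∈ ℂ, and N a positive natural number. Let A and B be the N×N matrices over R with identity diagonal and first subdiagonal entries -Θ and -Ψ respectively (zero elsewhere). Then the matrix E = (I - B⁻¹·A)·(I - ω·A) has entries: E_{ij} = 0 for i ≤ j; E_{j+1,j} = (1-ω)·(Θ - Ψ); and for i ≥ j+2, E_{ij} = (1-ω)·Ψ^{i-j-1}·(Θ - Ψ) + ω·Ψ^{i-j-2}·(Θ - Ψ)·Θ. -/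
/-!
Lower-triangular Toeplitz `N × N` matrices over `R` are the image of the ring homomorphism
`R⟦X⟧ → Matrix (Fin N) (Fin N) R` sending `f` to the matrix with entries `coeff (i - j) f`
below the diagonal (it factors through `R⟦X⟧ ⧸ (X ^ N)`). Under it `A` and `B` come from
`1 - Θ X` and `1 - Ψ X`, so `B⁻¹` comes from the geometric series `G = ∑ Ψⁿ Xⁿ`, and `E` from
`(1 - G (1 - Θ X)) (1 - ω (1 - Θ X)) = G (Θ - Ψ) X ((1 - ω) + ω Θ X)`,
whose coefficients are read off directly. `X` is central in `R⟦X⟧`, so this works for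
noncommutative `R`.
-/

open PowerSeries Finset

namespace PowerSeries

section LowerToeplitz

variable {R : Type*} [Semiring R] (N : ℕ)

noncomputable def lowerToeplitz : R⟦X⟧ →+* Matrix (Fin N) (Fin N) R where
  toFun f := Matrix.of fun i j => if (j : ℕ) ≤ i then coeff (i - j : ℕ) f else 0
  map_zero' := by ext; simp
  map_add' f g := by
    ext
    simp only [map_add, Matrix.of_apply, Matrix.add_apply]
    split_ifs <;> simp
  map_one' := by
    ext i j
    rw [Matrix.of_apply, coeff_one, Matrix.one_apply]
    split_ifs <;> first | rfl | omega
  -- The `(i, j)` entry of the product sums over `j ≤ m ≤ i`; `m ↦ (i - m, m - j)` maps this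
  -- range onto the antidiagonal of `i - j`.
  map_mul' f g := by
    ext i j
    simp only [Matrix.of_apply, Matrix.mul_apply, ite_zero_mul_ite_zero, ← sum_filter, coeff_mul]
    split_ifs with hji
    · symm
      refine sum_bij' (fun m _ => ((i - m : ℕ), (m - j : ℕ)))
        (fun p hp => ⟨j + p.2, by rw [HasAntidiagonal.mem_antidiagonal] at hp; omega⟩)
        (fun m h => ?_) (fun p h => ?_) (fun m h => ?_) (fun p h => ?_) (fun _ _ => rfl)
      all_goals
        have h' := h
        simp only [mem_filter, mem_univ, true_and, HasAntidiagonal.mem_antidiagonal,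
          Fin.ext_iff, Prod.ext_iff] at h' ⊢
        omega
    · refine (sum_eq_zero fun m hm => ?_).symm
      simp only [mem_filter, mem_univ, true_and] at hm
      omega

variable {N}

theorem lowerToeplitz_apply (f : R⟦X⟧) (i j : Fin N) :
    lowerToeplitz N f i j = if (j : ℕ) ≤ i then coeff (i - j : ℕ) f else 0 :=
  rfl

theorem lowerToeplitz_smul {S : Type*} [Semiring S] [Module S R] (c : S) (f : R⟦X⟧) :
    lowerToeplitz N (c • f) = c • lowerToeplitz N f := by
  ext i j
  simp only [lowerToeplitz_apply, coeff_smul, Matrix.smul_apply, smul_ite, smul_zero]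

end LowerToeplitz

section Ring

variable {R : Type*} [Ring R]

theorem lowerToeplitz_one_sub_C_mul_X_apply {N : ℕ} (a : R) (i j : Fin N) :
    lowerToeplitz N (1 - C a * X) i j =
      if i = j then 1 else if (i : ℕ) = (j : ℕ) + 1 then -a else 0 := by
  rw [lowerToeplitz_apply, map_sub, coeff_one, ← pow_one X, coeff_C_mul_X_pow]
  split_ifs <;> simp_all [Fin.ext_iff] <;> omega

theorem one_sub_C_mul_X_mul_mk_pow (a : R) : (1 - C a * X) * mk (a ^ ·) = 1 := by
  ext (_ | n) <;> simp [sub_mul, mul_assoc, coeff_C_mul, coeff_succ_X_mul, pow_succ']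

theorem mk_pow_mul_one_sub_C_mul_X (a : R) : mk (a ^ ·) * (1 - C a * X) = 1 := by
  ext (_ | n) <;> simp [mul_sub, ← mul_assoc, coeff_mul_C, coeff_succ_mul_X, pow_succ]

theorem one_sub_mk_pow_mul_one_sub_C_mul_X (Θ Ψ : R) :
    1 - mk (Ψ ^ ·) * (1 - C Θ * X) = mk (Ψ ^ ·) * C (Θ - Ψ) * X := by
  calc 1 - mk (Ψ ^ ·) * (1 - C Θ * X)
      = mk (Ψ ^ ·) * (1 - C Ψ * X) - mk (Ψ ^ ·) * (1 - C Θ * X) := by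
        rw [mk_pow_mul_one_sub_C_mul_X]
    _ = mk (Ψ ^ ·) * C (Θ - Ψ) * X := by
        rw [← mul_sub, sub_sub_sub_cancel_left, ← sub_mul, ← map_sub, mul_assoc]

theorem coeff_twoLevelErrorSeries {S : Type*} [CommRing S] [Algebra S R] (Θ Ψ : R) (ω : S)
    (n : ℕ) :
    coeff n ((1 - mk (Ψ ^ ·) * (1 - C Θ * X)) * (1 - ω • (1 - C Θ * X))) =
      (if 1 ≤ n then (1 - ω) • (Ψ ^ (n - 1) * (Θ - Ψ)) else 0) +
        if 2 ≤ n then ω • (Ψ ^ (n - 2) * (Θ - Ψ) * Θ) else 0 := by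
  have hrelax : 1 - ω • (1 - C Θ * X) = (1 - ω) • 1 + ω • (C Θ * X) := by
    rw [smul_sub, sub_smul, one_smul]; abel
  have hX :
      mk (Ψ ^ ·) * C (Θ - Ψ) * X * (C Θ * X) = mk (Ψ ^ ·) * C ((Θ - Ψ) * Θ) * X ^ 2 := by
    rw [map_mul, sq]; simp only [mul_assoc, (commute_X (C Θ)).symm.left_comm]
  have hcoeff (c : R) (k : ℕ) :
      coeff n (mk (Ψ ^ ·) * C c * X ^ k) = if k ≤ n then Ψ ^ (n - k) * c else 0 := by
    rw [coeff_mul_X_pow', coeff_mul_C, coeff_mk]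
  have hcoeff_one := hcoeff (Θ - Ψ) 1
  rw [pow_one] at hcoeff_one
  rw [one_sub_mk_pow_mul_one_sub_C_mul_X, hrelax, mul_add, mul_smul_comm, mul_smul_comm, mul_one,
    hX, map_add, coeff_smul, coeff_smul, hcoeff_one, hcoeff, smul_ite, smul_ite, smul_zero,
    smul_zero, mul_assoc]

end Ring

end PowerSeries

theorem stmt_6_general {R : Type*} [Ring R] [Algebra ℂ R] (Θ Ψ : R) (ω : ℂ) (N : ℕ)
    (A B Binv : Matrix (Fin N) (Fin N) R)
    (hA : ∀ i j : Fin N, A i j =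
      if i = j then 1 else if (i : ℕ) = (j : ℕ) + 1 then -Θ else 0)
    (hB : ∀ i j : Fin N, B i j =
      if i = j then 1 else if (i : ℕ) = (j : ℕ) + 1 then -Ψ else 0)
    (hBinv₂ : Binv * B = 1)
    (E : Matrix (Fin N) (Fin N) R)
    (hE : E = ((1 : Matrix (Fin N) (Fin N) R) - Binv * A) *
      ((1 : Matrix (Fin N) (Fin N) R) - ω • A)) :
    ∀ i j : Fin N,
      ((i : ℕ) ≤ (j : ℕ) → E i j = 0) ∧
      ((i : ℕ) = (j : ℕ) + 1 → E i j = (1 - ω) • (Θ - Ψ)) ∧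
      ((j : ℕ) + 2 ≤ (i : ℕ) → E i j =
        (1 - ω) • (Ψ ^ ((i : ℕ) - (j : ℕ) - 1) * (Θ - Ψ)) +
        ω • (Ψ ^ ((i : ℕ) - (j : ℕ) - 2) * (Θ - Ψ) * Θ)) := by
  have hA' : A = lowerToeplitz N (1 - C Θ * X) := by
    ext i j; rw [hA, lowerToeplitz_one_sub_C_mul_X_apply]
  have hB' : B = lowerToeplitz N (1 - C Ψ * X) := by
    ext i j; rw [hB, lowerToeplitz_one_sub_C_mul_X_apply]
  have hBinv : Binv = lowerToeplitz N (mk (Ψ ^ ·)) :=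
    left_inv_eq_right_inv hBinv₂ (by rw [hB', ← map_mul, one_sub_C_mul_X_mul_mk_pow, map_one])
  have hE' : E = lowerToeplitz N
      ((1 - mk (Ψ ^ ·) * (1 - C Θ * X)) * (1 - ω • (1 - C Θ * X))) := by
    rw [hE, hA', hBinv, ← map_mul, ← map_one (lowerToeplitz N), ← map_sub, ← lowerToeplitz_smul,
      ← map_sub, ← map_mul]
  intro i j
  rw [hE', lowerToeplitz_apply, coeff_twoLevelErrorSeries]
  refine ⟨fun h => ?_, fun h => ?_, fun h => ?_⟩ <;> split_ifs <;> simp_all <;> omega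

theorem stmt_6 {R : Type*} [Ring R] [Algebra ℂ R] (Θ Ψ : R) (ω : ℂ) (N : ℕ) (hN : 0 < N)
    (A B Binv : Matrix (Fin N) (Fin N) R)
    (hA : ∀ i j : Fin N, A i j =
      if i = j then 1 else if (i : ℕ) = (j : ℕ) + 1 then -Θ else 0)
    (hB : ∀ i j : Fin N, B i j =
      if i = j then 1 else if (i : ℕ) = (j : ℕ) + 1 then -Ψ else 0)
    (hBinv₁ : B * Binv = 1) (hBinv₂ : Binv * B = 1)
    (E : Matrix (Fin N) (Fin N) R)
    (hE : E = ((1 : Matrix (Fin N) (Fin N) R) - Binv * A) *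
      ((1 : Matrix (Fin N) (Fin N) R) - ω • A)) :
    ∀ i j : Fin N,
      ((i : ℕ) ≤ (j : ℕ) → E i j = 0) ∧
      ((i : ℕ) = (j : ℕ) + 1 → E i j = (1 - ω) • (Θ - Ψ)) ∧
      ((j : ℕ) + 2 ≤ (i : ℕ) → E i j =
        (1 - ω) • (Ψ ^ ((i : ℕ) - (j : ℕ) - 1) * (Θ - Ψ)) +
        ω • (Ψ ^ ((i : ℕ) - (j : ℕ) - 2) * (Θ - Ψ) * Θ)) :=
  stmt_6_general Θ Ψ ω N A B Binv hA hB hBinv₂ E hE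
end

section
/- Let a : ℕ → ℂ be a sequence with ∑ ‖a(ℓ)‖ < ∞, let N be a positive natural number, and define the N×N lower-triangular Toeplitz matrix T by T_{ij} = a(i-j) for i ≥ j and T_{ij} = 0 for i < j. Let S = sSup over x ∈ [0, 2π] of ‖∑'_{ℓ:ℕ} a(ℓ)·exp(i·ℓ·x)‖. Then for every vector v : Fin N → ℂ, the Euclidean norms satisfy ‖T.mulVec v‖₂ ≤ S·‖v‖₂; that is, the ℓ²-operator norm (largest singular value) of T is at most the supremum of the modulus of its generating function. -/
/-!
On the circle `ℝ/2πℤ` let `F = ∑ a ℓ e_ℓ` be the generating function and `P = ∑_{j<N} v j e_j`.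
Because `T` is lower-triangular Toeplitz, the `i`-th Fourier coefficient of `P * F` is `(T v) i`
for `i < N`. Bessel's inequality in `L²` then gives
`∑ ‖(T v) i‖² ≤ ‖P F‖₂² ≤ (sup ‖F‖)² ‖P‖₂² = (sup ‖F‖)² ∑ ‖v j‖²`.
-/

open MeasureTheory Complex AddCircle
open scoped InnerProductSpace Matrix

theorem Orthonormal.norm_sum_smul_sq {𝕜 E ι : Type*} [RCLike 𝕜] [NormedAddCommGroup E]
    [InnerProductSpace 𝕜 E] {v : ι → E} (hv : Orthonormal 𝕜 v) (l : ι → 𝕜) (s : Finset ι) :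
    ‖∑ i ∈ s, l i • v i‖ ^ 2 = ∑ i ∈ s, ‖l i‖ ^ 2 := by
  have h := hv.inner_sum l l s
  simp_rw [inner_self_eq_norm_sq_to_K, RCLike.conj_mul] at h
  exact_mod_cast h

theorem ContinuousMap.norm_toLp_mul_le {X R : Type*} [TopologicalSpace X] [CompactSpace X]
    [MeasurableSpace X] [BorelSpace X] [NormedRing R] [SecondCountableTopologyEither X R]
    {μ : Measure X} [IsFiniteMeasure μ] {p : ENNReal} [Fact (1 ≤ p)] (f g : C(X, R)) {c : ℝ}
    (hf : ∀ x, ‖f x‖ ≤ c) :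
    ‖toLp (E := R) p μ R (f * g)‖ ≤ c * ‖toLp (E := R) p μ R g‖ := by
  refine Lp.norm_le_mul_norm_of_ae_le_mul ?_
  filter_upwards [coeFn_toLp (p := p) (𝕜 := R) μ (f * g), coeFn_toLp (p := p) (𝕜 := R) μ g]
    with x hfg hg
  rw [hfg, hg, mul_apply]
  exact (norm_mul_le _ _).trans (by gcongr; exact hf x)

def lowerToeplitz {R : Type*} [Zero R] (a : ℕ → R) (N : ℕ) : Matrix (Fin N) (Fin N) R :=
  Matrix.of fun i j => if (j : ℕ) ≤ i then a (i - j) else 0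

theorem hasSum_ite_eq_add {M : Type*} [AddCommMonoid M] [TopologicalSpace M] (c : ℕ → M)
    (i j : ℕ) :
    HasSum (fun ℓ : ℕ => if (i : ℤ) = j + ℓ then c ℓ else 0)
      (if j ≤ i then c (i - j) else 0) := by
  split_ifs with hji
  · convert hasSum_ite_eq (i - j) (c (i - j)) using 2 with ℓ
    split_ifs <;> grind
  · convert hasSum_zero with ℓ
    rw [if_neg (by omega)]

section Fourier

variable {T : ℝ} [Fact (0 < T)]

theorem summable_norm_smul_fourier {ι : Type*} {c : ι → ℂ} (hc : Summable (‖c ·‖))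
    (k : ι → ℤ) : Summable fun i => ‖c i • fourier (T := T) (k i)‖ :=
  hc.congr fun i => by rw [norm_smul, fourier_norm, mul_one]

theorem HasSum.smul_fourier_mul {ι κ : Type*} {c : ι → ℂ} {d : κ → ℂ} {k : ι → ℤ} {m : κ → ℤ}
    {F G : C(AddCircle T, ℂ)} (hF : HasSum (fun i => c i • fourier (k i)) F)
    (hG : HasSum (fun j => d j • fourier (m j)) G) (hc : Summable (‖c ·‖))
    (hd : Summable (‖d ·‖)) :
    HasSum (fun p : ι × κ => (c p.1 * d p.2) • fourier (k p.1 + m p.2)) (F * G) := by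
  have hprod := summable_mul_of_summable_norm (summable_norm_smul_fourier (T := T) hc k)
    (summable_norm_smul_fourier hd m)
  refine (hF.mul hG hprod).congr_fun fun p => ?_
  ext x
  simp only [ContinuousMap.smul_apply, ContinuousMap.mul_apply, fourier_add, smul_eq_mul]
  ring

theorem HasSum.inner_fourierLp_toLp {ι : Type*} {c : ι → ℂ} {k : ι → ℤ}
    {F : C(AddCircle T, ℂ)} (h : HasSum (fun i => c i • fourier (k i)) F) (n : ℤ) :
    HasSum (fun i => if n = k i then c i else 0)
      ⟪fourierLp 2 n, ContinuousMap.toLp (E := ℂ) 2 haarAddCircle ℂ F⟫_ℂ := by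
  refine (((innerSL ℂ (fourierLp 2 n)).comp
    (ContinuousMap.toLp (E := ℂ) 2 haarAddCircle ℂ)).hasSum h).congr_fun fun i => ?_
  rw [ContinuousLinearMap.comp_apply, map_smul, innerSL_apply_apply, inner_smul_right,
    orthonormal_iff_ite.mp orthonormal_fourier, mul_ite, mul_one, mul_zero]

theorem norm_toLp_sum_smul_fourier_sq {ι : Type*} {k : ι → ℤ} (hk : Function.Injective k)
    (c : ι → ℂ) (s : Finset ι) :
    ‖ContinuousMap.toLp (E := ℂ) 2 haarAddCircle ℂ (∑ i ∈ s, c i • fourier (T := T) (k i))‖ ^ 2 =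
      ∑ i ∈ s, ‖c i‖ ^ 2 := by
  simp only [map_sum, map_smul]
  exact (orthonormal_fourier.comp k hk).norm_sum_smul_sq c s

theorem fourier_coe_apply_two_pi (n : ℤ) (x : ℝ) :
    fourier n (x : AddCircle (2 * Real.pi)) = exp (I * n * x) := by
  rw [fourier_coe_apply]
  congr 1
  field_simp
  push_cast
  ring

theorem norm_le_sSup_image_Icc {E : Type*} [SeminormedAddCommGroup E] (f : C(AddCircle T, E))
    (t : AddCircle T) : ‖f t‖ ≤ sSup ((fun x : ℝ => ‖f x‖) '' Set.Icc 0 T) := by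
  obtain ⟨x, hx, rfl⟩ := t.eq_coe_Ico
  refine le_csSup ((isCompact_Icc.image ?_).bddAbove) ⟨x, Set.Ico_subset_Icc_self hx, rfl⟩
  exact (map_continuous f).norm.comp (AddCircle.continuous_mk' T)

theorem lowerToeplitz_mulVec_eq_inner (a : ℕ → ℂ) (ha : Summable (‖a ·‖))
    {F : C(AddCircle T, ℂ)} (hF : HasSum (fun ℓ : ℕ => a ℓ • fourier ℓ) F) {N : ℕ}
    (v : Fin N → ℂ) (i : Fin N) :
    (lowerToeplitz a N *ᵥ v) i = ⟪fourierLp 2 (i : ℕ),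
      ContinuousMap.toLp (E := ℂ) 2 haarAddCircle ℂ ((∑ j, v j • fourier (j : ℕ)) * F)⟫_ℂ := by
  have hP : HasSum (fun j : Fin N => v j • fourier (T := T) (j : ℕ))
      (∑ j, v j • fourier (j : ℕ)) := hasSum_fintype _
  have hcoeff := (hP.smul_fourier_mul hF .of_finite ha).inner_fourierLp_toLp (i : ℕ)
  refine (hasSum_fintype _).unique (hcoeff.prod_fiberwise fun j => ?_)
  simpa only [lowerToeplitz, Matrix.of_apply, ite_mul, zero_mul, mul_comm (a _)]
    using hasSum_ite_eq_add (fun ℓ => v j * a ℓ) i j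

theorem sum_norm_sq_lowerToeplitz_mulVec_le (a : ℕ → ℂ) (ha : Summable (‖a ·‖))
    {F : C(AddCircle T, ℂ)} (hF : HasSum (fun ℓ : ℕ => a ℓ • fourier ℓ) F) {S : ℝ}
    (hS : ∀ t, ‖F t‖ ≤ S) {N : ℕ} (v : Fin N → ℂ) :
    ∑ i, ‖(lowerToeplitz a N *ᵥ v) i‖ ^ 2 ≤ S ^ 2 * ∑ i, ‖v i‖ ^ 2 := by
  set toLp := ContinuousMap.toLp (E := ℂ) 2 (haarAddCircle (T := T)) ℂ
  set P : C(AddCircle T, ℂ) := ∑ j, v j • fourier (j : ℕ)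
  have hcast : Function.Injective fun j : Fin N => ((j : ℕ) : ℤ) :=
    fun _ _ h => Fin.ext (by simpa using h)
  calc ∑ i, ‖(lowerToeplitz a N *ᵥ v) i‖ ^ 2
      = ∑ i : Fin N, ‖⟪fourierLp 2 (i : ℕ), toLp (P * F)⟫_ℂ‖ ^ 2 := by
        simp_rw [lowerToeplitz_mulVec_eq_inner a ha hF]; rfl
    _ ≤ ‖toLp (F * P)‖ ^ 2 := by
        rw [mul_comm]
        exact (orthonormal_fourier.comp _ hcast).sum_inner_products_le _
    _ ≤ (S * ‖toLp P‖) ^ 2 := by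
        gcongr
        exact ContinuousMap.norm_toLp_mul_le F P hS
    _ = S ^ 2 * ∑ i, ‖v i‖ ^ 2 := by
        rw [mul_pow, norm_toLp_sum_smul_fourier_sq hcast]

end Fourier

theorem stmt_17_general (a : ℕ → ℂ) (ha : Summable fun ℓ : ℕ => ‖a ℓ‖)
    (N : ℕ)
    (T : Matrix (Fin N) (Fin N) ℂ)
    (hT : ∀ i j : Fin N, T i j =
      if (j : ℕ) ≤ (i : ℕ) then a ((i : ℕ) - (j : ℕ)) else 0)
    (S : ℝ)
    (hS : S = sSup ((fun x : ℝ =>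
        ‖∑' ℓ : ℕ, a ℓ * Complex.exp (Complex.I * (ℓ : ℂ) * (x : ℂ))‖) ''
      Set.Icc 0 (2 * Real.pi))) :
    ∀ v : Fin N → ℂ,
      Real.sqrt (∑ i, ‖T.mulVec v i‖ ^ 2) ≤ S * Real.sqrt (∑ i, ‖v i‖ ^ 2) := by
  intro v
  have : Fact (0 < 2 * Real.pi) := ⟨Real.two_pi_pos⟩
  obtain rfl : T = lowerToeplitz a N := Matrix.ext hT
  obtain ⟨F, hF⟩ := (summable_norm_smul_fourier (T := 2 * Real.pi) ha Nat.cast).of_norm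
  have hF_coe (x : ℝ) : F x = ∑' ℓ : ℕ, a ℓ * exp (I * ℓ * x) := by
    refine (((ContinuousMap.evalCLM ℂ (x : AddCircle (2 * Real.pi))).hasSum hF).congr_fun
      fun ℓ => ?_).tsum_eq.symm
    rw [ContinuousMap.evalCLM_apply, ContinuousMap.smul_apply, fourier_coe_apply_two_pi,
      Int.cast_natCast, smul_eq_mul]
  have hFS (t : AddCircle (2 * Real.pi)) : ‖F t‖ ≤ S := by
    refine (norm_le_sSup_image_Icc F t).trans_eq ?_
    rw [hS]
    congr 1
    exact Set.image_congr fun x _ => by rw [hF_coe]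
  have hS0 : 0 ≤ S := (norm_nonneg _).trans (hFS 0)
  calc √(∑ i, ‖(lowerToeplitz a N *ᵥ v) i‖ ^ 2)
      ≤ √(S ^ 2 * ∑ i, ‖v i‖ ^ 2) :=
        Real.sqrt_le_sqrt (sum_norm_sq_lowerToeplitz_mulVec_le a ha hF hFS v)
    _ = S * √(∑ i, ‖v i‖ ^ 2) := by rw [Real.sqrt_mul (sq_nonneg S), Real.sqrt_sq hS0]

theorem stmt_17 (a : ℕ → ℂ) (ha : Summable fun ℓ : ℕ => ‖a ℓ‖)
    (N : ℕ) (hN : 0 < N)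
    (T : Matrix (Fin N) (Fin N) ℂ)
    (hT : ∀ i j : Fin N, T i j =
      if (j : ℕ) ≤ (i : ℕ) then a ((i : ℕ) - (j : ℕ)) else 0)
    (S : ℝ)
    (hS : S = sSup ((fun x : ℝ =>
        ‖∑' ℓ : ℕ, a ℓ * Complex.exp (Complex.I * (ℓ : ℂ) * (x : ℂ))‖) ''
      Set.Icc 0 (2 * Real.pi))) :
    ∀ v : Fin N → ℂ,
      Real.sqrt (∑ i, ‖T.mulVec v i‖ ^ 2) ≤ S * Real.sqrt (∑ i, ‖v i‖ ^ 2) :=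
  stmt_17_general a ha N T hT S hS
end

section
/- Let λ, μ ∈ ℂ with |λ| < 1 and |μ| < 1, let m be a positive natural number, ω₁, ω₂ ∈ ℝ, and N a positive natural number. Define the N×N complex matrix Ẽ by: Ẽ_{ij} = 0 for i ≤ j; Ẽ_{ij} = (1-ω₂)(1-ω₁)·(λ^m - μ) for i = j+1; Ẽ_{ij} = (1-ω₂)(1-ω₁)·μ·(λ^m - μ) + (ω₂(1-ω₁)+ω₁(1-ω₂))·(λ^m - μ)·λ^m for i = j+2; and Ẽ_{ij} = (1-ω₂)(1-ω₁)·μ^{i-j-1}·(λ^m - μ) + (ω₂(1-ω₁)+ω₁(1-ω₂))·μ^{i-j-2}·(λ^m - μ)·λ^m + ω₂·ω₁·μ^{i-j-3}·(λ^m - μ)·λ^{2m} for i ≥ j+3. Then the ℓ²-operator norm (largest singular value) of Ẽ satisfies ‖Ẽ‖ ≤ sSup over x ∈ [0, 2π] of |λ^m - μ|·|(1-ω₂)(1-ω₁) + exp(i·x)·(ω₂(1-ω₁)+ω₁(1-ω₂))·λ^m + exp(2·i·x)·ω₂·ω₁·λ^{2m}| / |1 - exp(i·x)·μ|. -/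
/-!
With `κ = λᵐ - μ`, the matrix `E` is the `N × N` section of the lower triangular Toeplitz matrix
whose symbol is `f z = z (α + β z + γ z²) / (1 - μ z)`, where `α = (1-ω₂)(1-ω₁) κ`,
`β = (ω₂(1-ω₁) + ω₁(1-ω₂)) κ λᵐ` and `γ = ω₂ ω₁ κ λ²ᵐ`. Identifying `u` with the polynomial
`U = ∑ uⱼ Xʲ`, the vector `E u` is made of the first `N` coefficients of `P U`, for any polynomial
`P` whose first `N` coefficients are those of `f`; Parseval's identity on the unit circle then gives
`‖E u‖ ≤ sup_{|z|=1} |P z| ‖u‖`. Taking for `P` the product of `z (α + β z + γ z²)` with the first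
`n ≥ N` terms of the geometric series of `1 / (1 - μ z)` gives `|P z| ≤ |f z| (1 + |μ|ⁿ)` on the
circle; let `n → ∞`.
-/

open Polynomial Metric Finset

namespace Polynomial

section ofFinFun

variable {R : Type*} [CommSemiring R] {N : ℕ}

noncomputable def ofFinFun (u : Fin N → R) : R[X] := ∑ j, C (u j) * X ^ (j : ℕ)

theorem coeff_ofFinFun (u : Fin N → R) (k : ℕ) :
    (ofFinFun u).coeff k = ∑ j : Fin N, if k = j then u j else 0 := by
  simp only [ofFinFun, finsetSum_coeff, coeff_C_mul_X_pow]

theorem coeff_mul_ofFinFun (P : R[X]) (u : Fin N → R) (i : ℕ) :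
    (P * ofFinFun u).coeff i =
      ∑ j : Fin N, (if (j : ℕ) ≤ i then P.coeff (i - j) else 0) * u j := by
  simp only [ofFinFun, Finset.mul_sum, finsetSum_coeff, mul_left_comm P, coeff_C_mul,
    coeff_mul_X_pow', mul_comm (u _)]

end ofFinFun

theorem sum_support_sq_norm_coeff_ofFinFun {N : ℕ} (u : Fin N → ℂ) :
    ∑ k ∈ (ofFinFun u).support, ‖(ofFinFun u).coeff k‖ ^ 2 = ∑ j, ‖u j‖ ^ 2 := by
  have hsupp : (ofFinFun u).support ⊆ range N := by
    intro k hk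
    by_contra hkN
    refine mem_support_iff.1 hk ?_
    rw [coeff_ofFinFun]
    exact Finset.sum_eq_zero fun j _ => if_neg (by simp at hkN; omega)
  rw [Finset.sum_subset hsupp fun k _ hk => by simp [notMem_support_iff.1 hk],
    ← Fin.sum_univ_eq_sum_range (fun k => ‖(ofFinFun u).coeff k‖ ^ 2)]
  simp [coeff_ofFinFun, Fin.val_inj]

theorem sum_fin_sq_norm_coeff_le (p : ℂ[X]) (n : ℕ) :
    ∑ i : Fin n, ‖p.coeff i‖ ^ 2 ≤ ∑ k ∈ p.support, ‖p.coeff k‖ ^ 2 := by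
  rw [Fin.sum_univ_eq_sum_range (fun k => ‖p.coeff k‖ ^ 2)]
  calc ∑ k ∈ range n, ‖p.coeff k‖ ^ 2 ≤ ∑ k ∈ range n ∪ p.support, ‖p.coeff k‖ ^ 2 :=
        Finset.sum_le_sum_of_subset_of_nonneg subset_union_left fun _ _ _ => by positivity
    _ = ∑ k ∈ p.support, ‖p.coeff k‖ ^ 2 :=
        (Finset.sum_subset subset_union_right fun k _ hk => by
          simp [notMem_support_iff.1 hk]).symm

end Polynomial

theorem Matrix.norm_toEuclideanCLM_toeplitz_le {N : ℕ} (P : ℂ[X])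
    (E : Matrix (Fin N) (Fin N) ℂ)
    (hE : ∀ i j : Fin N, E i j = if (j : ℕ) ≤ i then P.coeff (i - j) else 0) (M : ℝ)
    (hP : ∀ z ∈ sphere (0 : ℂ) 1, ‖P.eval z‖ ≤ M) :
    ‖toEuclideanCLM (𝕜 := ℂ) E‖ ≤ M := by
  have hM : 0 ≤ M := (norm_nonneg _).trans (hP 1 (by simp))
  refine ContinuousLinearMap.opNorm_le_bound _ hM fun u => ?_
  set U := ofFinFun (WithLp.ofLp u)
  have hEu : ∀ i, toEuclideanCLM (𝕜 := ℂ) E u i = (P * U).coeff i := fun i => by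
    simp [coeff_mul_ofFinFun, hE, Matrix.mulVec, dotProduct, U]
  have hint : ∀ p : ℂ[X], CircleIntegrable (fun z => ‖p.eval z‖ ^ 2) 0 1 := fun p =>
    ContinuousOn.circleIntegrable' (by fun_prop)
  refine le_of_pow_le_pow_left₀ two_ne_zero (by positivity) ?_
  calc ‖toEuclideanCLM (𝕜 := ℂ) E u‖ ^ 2 = ∑ i : Fin N, ‖(P * U).coeff i‖ ^ 2 := by
        simp [EuclideanSpace.norm_sq_eq, hEu]
    _ ≤ ∑ k ∈ (P * U).support, ‖(P * U).coeff k‖ ^ 2 := sum_fin_sq_norm_coeff_le _ _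
    _ = Real.circleAverage (fun z => ‖(P * U).eval z‖ ^ 2) 0 1 :=
        sum_sq_norm_coeff_eq_circleAverage _
    _ ≤ Real.circleAverage (fun z => M ^ 2 • ‖U.eval z‖ ^ 2) 0 1 := by
        refine Real.circleAverage_mono (hint _) ((hint U).const_smul (a := M ^ 2)) fun z hz => ?_
        rw [eval_mul, norm_mul, mul_pow, smul_eq_mul]
        gcongr
        exact hP z (by simpa using hz)
    _ = (M * ‖u‖) ^ 2 := by
        rw [Real.circleAverage_fun_smul (a := M ^ 2), ← sum_sq_norm_coeff_eq_circleAverage,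
          sum_support_sq_norm_coeff_ofFinFun, mul_pow, EuclideanSpace.norm_sq_eq, smul_eq_mul]

theorem norm_geom_sum_le {𝕜 : Type*} [NormedField 𝕜] {w : 𝕜} (hw : ‖w‖ < 1) (n : ℕ) :
    ‖∑ j ∈ range n, w ^ j‖ ≤ (1 + ‖w‖ ^ n) / ‖1 - w‖ := by
  have hw1 : w ≠ 1 := fun h => by simp [h] at hw
  rw [geom_sum_eq hw1, norm_div, norm_sub_rev w]
  gcongr
  exact (norm_sub_le _ _).trans_eq (by rw [norm_pow, norm_one, add_comm])

theorem le_of_forall_le_mul_one_add_pow {a S r : ℝ} (hr0 : 0 ≤ r) (hr : r < 1) (N : ℕ)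
    (h : ∀ n, N ≤ n → a ≤ S * (1 + r ^ n)) : a ≤ S := by
  have hlim : Filter.Tendsto (fun n : ℕ => S * (1 + r ^ n)) Filter.atTop (nhds S) := by
    simpa using ((tendsto_pow_atTop_nhds_zero_of_lt_one hr0 hr).const_add 1).const_mul S
  exact ge_of_tendsto hlim (Filter.eventually_atTop.2 ⟨N, h⟩)

namespace Polynomial

variable {R : Type*} [Semiring R]

noncomputable def truncSymbol (α β γ μ : R) (n : ℕ) : R[X] :=
  (C α * X + C β * X ^ 2 + C γ * X ^ 3) * ∑ j ∈ range n, C (μ ^ j) * X ^ j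

theorem coeff_truncSymbol {α β γ μ : R} {n k : ℕ} (hk : k ≤ n) :
    (truncSymbol α β γ μ n).coeff k =
      (if 1 ≤ k then α * μ ^ (k - 1) else 0) + (if 2 ≤ k then β * μ ^ (k - 2) else 0) +
        (if 3 ≤ k then γ * μ ^ (k - 3) else 0) := by
  have hgeom : ∀ d < n, (∑ j ∈ range n, C (μ ^ j) * X ^ j).coeff d = μ ^ d := fun d hd => by
    simp only [finsetSum_coeff, coeff_C_mul_X_pow, sum_ite_eq, mem_range, if_pos hd]
  rw [truncSymbol]
  nth_rewrite 1 [← pow_one (X : R[X])]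
  simp only [add_mul, coeff_add, mul_assoc, coeff_C_mul, coeff_X_pow_mul']
  congr 2 <;> split_ifs <;> first | rw [mul_zero] | rw [hgeom _ (by omega)]

end Polynomial

theorem Matrix.entry_eq_coeff_truncSymbol {R : Type*} [Semiring R] {N n : ℕ} (hn : N ≤ n)
    {α β γ μ : R} (E : Matrix (Fin N) (Fin N) R)
    (h0 : ∀ i j : Fin N, (i : ℕ) ≤ j → E i j = 0)
    (h1 : ∀ i j : Fin N, (i : ℕ) = j + 1 → E i j = α)
    (h2 : ∀ i j : Fin N, (i : ℕ) = j + 2 → E i j = α * μ + β)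
    (h3 : ∀ i j : Fin N, (j : ℕ) + 3 ≤ i →
      E i j = α * μ ^ ((i : ℕ) - j - 1) + β * μ ^ ((i : ℕ) - j - 2) + γ * μ ^ ((i : ℕ) - j - 3))
    (i j : Fin N) :
    E i j = if (j : ℕ) ≤ i then (truncSymbol α β γ μ n).coeff (i - j) else 0 := by
  split_ifs with hji
  · rw [coeff_truncSymbol (by omega)]
    obtain hij | hij | hij | hij :
        (i : ℕ) = j ∨ (i : ℕ) = j + 1 ∨ (i : ℕ) = j + 2 ∨ (j : ℕ) + 3 ≤ i := by
      omega
    · simp [h0 i j hij.le, hij]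
    · simp [h1 i j hij, hij]
    · simp [h2 i j hij, hij]
    · rw [h3 i j hij, if_pos (by omega), if_pos (by omega), if_pos (by omega)]
  · exact h0 i j (by omega)

theorem Polynomial.norm_eval_truncSymbol_le {α β γ μ z : ℂ} (hμ : ‖μ‖ < 1) (hz : ‖z‖ = 1)
    (n : ℕ) :
    ‖(truncSymbol α β γ μ n).eval z‖ ≤
      ‖α + β * z + γ * z ^ 2‖ / ‖1 - z * μ‖ * (1 + ‖μ‖ ^ n) := by
  have hzμ : ‖z * μ‖ = ‖μ‖ := by rw [norm_mul, hz, one_mul]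
  have heval : (truncSymbol α β γ μ n).eval z =
      z * (α + β * z + γ * z ^ 2) * ∑ j ∈ range n, (z * μ) ^ j := by
    simp only [truncSymbol, eval_mul, eval_add, eval_C, eval_X, eval_pow, eval_finsetSum,
      Finset.mul_sum, mul_pow]
    exact Finset.sum_congr rfl fun j _ => by ring
  rw [heval, norm_mul, norm_mul, hz, one_mul, div_mul_eq_mul_div, mul_div_assoc]
  gcongr
  simpa only [hzμ] using norm_geom_sum_le (hzμ.trans_lt hμ) n

theorem stmt_19_general (lam μ : ℂ) (hμ : ‖μ‖ < 1)
    (m : ℕ) (ω₁ ω₂ : ℝ) (N : ℕ)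
    (E : Matrix (Fin N) (Fin N) ℂ)
    (hE0 : ∀ i j : Fin N, (i : ℕ) ≤ (j : ℕ) → E i j = 0)
    (hE1 : ∀ i j : Fin N, (i : ℕ) = (j : ℕ) + 1 →
      E i j = (1 - (ω₂ : ℂ)) * (1 - (ω₁ : ℂ)) * (lam ^ m - μ))
    (hE2 : ∀ i j : Fin N, (i : ℕ) = (j : ℕ) + 2 →
      E i j = (1 - (ω₂ : ℂ)) * (1 - (ω₁ : ℂ)) * μ * (lam ^ m - μ) +
        ((ω₂ : ℂ) * (1 - (ω₁ : ℂ)) + (ω₁ : ℂ) * (1 - (ω₂ : ℂ))) * (lam ^ m - μ) * lam ^ m)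
    (hE3 : ∀ i j : Fin N, (j : ℕ) + 3 ≤ (i : ℕ) →
      E i j = (1 - (ω₂ : ℂ)) * (1 - (ω₁ : ℂ)) * μ ^ ((i : ℕ) - (j : ℕ) - 1) * (lam ^ m - μ) +
        ((ω₂ : ℂ) * (1 - (ω₁ : ℂ)) + (ω₁ : ℂ) * (1 - (ω₂ : ℂ))) *
          μ ^ ((i : ℕ) - (j : ℕ) - 2) * (lam ^ m - μ) * lam ^ m +
        (ω₂ : ℂ) * (ω₁ : ℂ) * μ ^ ((i : ℕ) - (j : ℕ) - 3) * (lam ^ m - μ) * lam ^ (2 * m)) :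
    ‖Matrix.toEuclideanCLM (𝕜 := ℂ) E‖ ≤
      sSup ((fun x : ℝ =>
          ‖lam ^ m - μ‖ *
            ‖(1 - (ω₂ : ℂ)) * (1 - (ω₁ : ℂ)) +
              Complex.exp (Complex.I * (x : ℂ)) *
                ((ω₂ : ℂ) * (1 - (ω₁ : ℂ)) + (ω₁ : ℂ) * (1 - (ω₂ : ℂ))) * lam ^ m +
              Complex.exp (2 * Complex.I * (x : ℂ)) * (ω₂ : ℂ) * (ω₁ : ℂ) * lam ^ (2 * m)‖ /
            ‖1 - Complex.exp (Complex.I * (x : ℂ)) * μ‖) ''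
        Set.Icc 0 (2 * Real.pi)) := by
  set a : ℂ := (1 - ω₂) * (1 - ω₁)
  set b : ℂ := ω₂ * (1 - ω₁) + ω₁ * (1 - ω₂)
  set κ := lam ^ m - μ
  set F := fun x : ℝ => ‖κ‖ * ‖a + Complex.exp (Complex.I * x) * b * lam ^ m +
      Complex.exp (2 * Complex.I * x) * ω₂ * ω₁ * lam ^ (2 * m)‖ /
    ‖1 - Complex.exp (Complex.I * x) * μ‖
  have hF : Continuous F := by
    refine Continuous.div (by fun_prop) (by fun_prop) fun x => norm_ne_zero_iff.2 ?_
    refine sub_ne_zero.2 fun h => hμ.ne' ?_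
    simpa [Complex.norm_exp_I_mul_ofReal] using congrArg norm h
  have hbdd : BddAbove (F '' Set.Icc 0 (2 * Real.pi)) := (isCompact_Icc.image hF).bddAbove
  set S := sSup (F '' Set.Icc 0 (2 * Real.pi))
  have hsymbol : ∀ (n : ℕ) (x : ℝ),
      ‖(truncSymbol (a * κ) (b * κ * lam ^ m) (ω₂ * ω₁ * κ * lam ^ (2 * m)) μ n).eval
        (Complex.exp (Complex.I * x))‖ ≤ F x * (1 + ‖μ‖ ^ n) := fun n x => by
    have h2 : Complex.exp (2 * Complex.I * x) = Complex.exp (Complex.I * x) ^ 2 := by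
      rw [← Complex.exp_nat_mul]; ring_nf
    convert norm_eval_truncSymbol_le hμ (Complex.norm_exp_I_mul_ofReal x) n using 2
    simp only [F, h2, ← norm_mul]
    congr 2
    ring
  have hbound : ∀ n, N ≤ n → ‖Matrix.toEuclideanCLM (𝕜 := ℂ) E‖ ≤ S * (1 + ‖μ‖ ^ n) := by
    intro n hn
    refine Matrix.norm_toEuclideanCLM_toeplitz_le
      (truncSymbol (a * κ) (b * κ * lam ^ m) (ω₂ * ω₁ * κ * lam ^ (2 * m)) μ n) E
      (Matrix.entry_eq_coeff_truncSymbol hn E hE0 hE1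
        (fun i j h => (hE2 i j h).trans (by ring)) (fun i j h => (hE3 i j h).trans (by ring)))
      _ fun z hz => ?_
    obtain ⟨x, hx, rfl⟩ : z ∈ circleMap 0 1 '' Set.Ioc 0 (2 * Real.pi) := by
      rwa [image_circleMap_Ioc, abs_one]
    rw [circleMap_zero, Complex.ofReal_one, one_mul, mul_comm]
    exact (hsymbol n x).trans
      (by gcongr; exact le_csSup hbdd ⟨x, Set.Ioc_subset_Icc_self hx, rfl⟩)
  exact le_of_forall_le_mul_one_add_pow (norm_nonneg μ) hμ N hbound

theorem stmt_19 (lam μ : ℂ) (hlam : ‖lam‖ < 1) (hμ : ‖μ‖ < 1)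
    (m : ℕ) (hm : 0 < m) (ω₁ ω₂ : ℝ) (N : ℕ) (hN : 0 < N)
    (E : Matrix (Fin N) (Fin N) ℂ)
    (hE0 : ∀ i j : Fin N, (i : ℕ) ≤ (j : ℕ) → E i j = 0)
    (hE1 : ∀ i j : Fin N, (i : ℕ) = (j : ℕ) + 1 →
      E i j = (1 - (ω₂ : ℂ)) * (1 - (ω₁ : ℂ)) * (lam ^ m - μ))
    (hE2 : ∀ i j : Fin N, (i : ℕ) = (j : ℕ) + 2 →
      E i j = (1 - (ω₂ : ℂ)) * (1 - (ω₁ : ℂ)) * μ * (lam ^ m - μ) +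
        ((ω₂ : ℂ) * (1 - (ω₁ : ℂ)) + (ω₁ : ℂ) * (1 - (ω₂ : ℂ))) * (lam ^ m - μ) * lam ^ m)
    (hE3 : ∀ i j : Fin N, (j : ℕ) + 3 ≤ (i : ℕ) →
      E i j = (1 - (ω₂ : ℂ)) * (1 - (ω₁ : ℂ)) * μ ^ ((i : ℕ) - (j : ℕ) - 1) * (lam ^ m - μ) +
        ((ω₂ : ℂ) * (1 - (ω₁ : ℂ)) + (ω₁ : ℂ) * (1 - (ω₂ : ℂ))) *
          μ ^ ((i : ℕ) - (j : ℕ) - 2) * (lam ^ m - μ) * lam ^ m +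
        (ω₂ : ℂ) * (ω₁ : ℂ) * μ ^ ((i : ℕ) - (j : ℕ) - 3) * (lam ^ m - μ) * lam ^ (2 * m)) :
    ‖Matrix.toEuclideanCLM (𝕜 := ℂ) E‖ ≤
      sSup ((fun x : ℝ =>
          ‖lam ^ m - μ‖ *
            ‖(1 - (ω₂ : ℂ)) * (1 - (ω₁ : ℂ)) +
              Complex.exp (Complex.I * (x : ℂ)) *
                ((ω₂ : ℂ) * (1 - (ω₁ : ℂ)) + (ω₁ : ℂ) * (1 - (ω₂ : ℂ))) * lam ^ m +
              Complex.exp (2 * Complex.I * (x : ℂ)) * (ω₂ : ℂ) * (ω₁ : ℂ) * lam ^ (2 * m)‖ /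
            ‖1 - Complex.exp (Complex.I * (x : ℂ)) * μ‖) ''
        Set.Icc 0 (2 * Real.pi)) :=
  stmt_19_general lam μ hμ m ω₁ ω₂ N E hE0 hE1 hE2 hE3
end
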